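/- arXiv:2601.15455 — 4 statements merged into one kernel-verified Lean document; each statement's English description precedes it below -/
import Mathlib

section
/- If a type τ has locally unique bound variables with respect to the environment Γ extended with (α:κ), and the descriptor δ is well-kinded with kind κ in Γ, then the capture-avoiding substitution {α ↦ δ}τ is α-equivalent to the capturing substitution [α ↦ δ]τ. -/
/-- Kinds: the kind of effects and the kind of types. -/
inductive Kind : Type
| effect
| type

/-- Effects. -/
inductive Eff : Type
| tvar (a : ℕ)
| uvar (x : ℕ)
| pure
| join (e₁ e₂ : Eff)

/-- Types (with a base type Int). -/
inductive Ty : Type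
| tvar (a : ℕ)
| uvar (x : ℕ)
| int
| arrow (t₁ : Ty) (e : Eff) (t₂ : Ty)
| all (a : ℕ) (k : Kind) (t : Ty)

/-- Descriptors: types or effects. -/
inductive Desc : Type
| ty (t : Ty)
| eff (e : Eff)

/-- Expressions. -/
inductive Expr : Type
| var (x : ℕ)
| lit (n : ℤ)
| lam (x : ℕ) (t : Ty) (e : Expr)
| lamU (x : ℕ) (e : Expr)
| app (e₁ e₂ : Expr)
| lamD (a : ℕ) (k : Kind) (e : Expr)
| appD (e : Expr) (d : Desc)
| elet (x : ℕ) (e₁ e₂ : Expr)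

/-- Environment entries: kind assignments and term-variable type assignments. -/
inductive Entry : Type
| kind (a : ℕ) (k : Kind)
| var (x : ℕ) (t : Ty)

abbrev Env := List Entry

def lookupVar : Env → ℕ → Option Ty
| [], _ => none
| Entry.var y t :: Γ, x => if x = y then some t else lookupVar Γ x
| Entry.kind _ _ :: Γ, x => lookupVar Γ x

def lookupKind : Env → ℕ → Option Kind
| [], _ => none
| Entry.kind b k :: Γ, a => if a = b then some k else lookupKind Γ a
| Entry.var _ _ :: Γ, a => lookupKind Γ a

/-- Domain of kind assignments of an environment. -/
def Env.kdom : Env → Finset ℕ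
| [] => ∅
| Entry.kind a _ :: Γ => insert a (Env.kdom Γ)
| Entry.var _ _ :: Γ => Env.kdom Γ

/-- Free type variables of an effect. -/
def Eff.fv : Eff → Finset ℕ
| .tvar a => {a}
| .uvar _ => ∅
| .pure => ∅
| .join e₁ e₂ => e₁.fv ∪ e₂.fv

/-- Free unification variables of an effect. -/
def Eff.fuv : Eff → Finset ℕ
| .tvar _ => ∅
| .uvar x => {x}
| .pure => ∅
| .join e₁ e₂ => e₁.fuv ∪ e₂.fuv

/-- Free type variables of a type. -/
def Ty.fv : Ty → Finset ℕ
| .tvar a => {a}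
| .uvar _ => ∅
| .int => ∅
| .arrow t₁ e t₂ => t₁.fv ∪ e.fv ∪ t₂.fv
| .all a _ t => t.fv.erase a

/-- Free unification variables of a type (including those in effect annotations). -/
def Ty.fuv : Ty → Finset ℕ
| .tvar _ => ∅
| .uvar x => {x}
| .int => ∅
| .arrow t₁ e t₂ => t₁.fuv ∪ e.fuv ∪ t₂.fuv
| .all _ _ t => t.fuv

/-- Bound type variables of a type, as a list of binder occurrences. -/
def Ty.bv : Ty → List ℕ
| .tvar _ => []
| .uvar _ => []
| .int => []
| .arrow t₁ _ t₂ => t₁.bv ++ t₂.bv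
| .all a _ t => a :: t.bv

def Desc.fv : Desc → Finset ℕ
| .ty t => t.fv
| .eff e => e.fv

def Desc.fuv : Desc → Finset ℕ
| .ty t => t.fuv
| .eff e => e.fuv

def Desc.bv : Desc → List ℕ
| .ty t => t.bv
| .eff _ => []

/-- Bound type variables (binder occurrences) of an expression, including binders
occurring in type annotations and descriptors. -/
def Expr.bv : Expr → List ℕ
| .var _ => []
| .lit _ => []
| .lam _ t e => t.bv ++ e.bv
| .lamU _ e => e.bv
| .app e₁ e₂ => e₁.bv ++ e₂.bv
| .lamD a _ e => a :: e.bv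
| .appD e d => e.bv ++ d.bv
| .elet _ e₁ e₂ => e₁.bv ++ e₂.bv

/-- Bound type variables occurring in the types assigned by an environment. -/
def Env.bv : Env → List ℕ
| [] => []
| Entry.kind _ _ :: Γ => Env.bv Γ
| Entry.var _ t :: Γ => t.bv ++ Env.bv Γ

/-- Free unification variables of an environment. -/
def Env.fuv : Env → Finset ℕ
| [] => ∅
| Entry.kind _ _ :: Γ => Env.fuv Γ
| Entry.var _ t :: Γ => t.fuv ∪ Env.fuv Γ

/-- Capturing substitution of a descriptor for a type variable, in effects. -/
def Eff.substC (a : ℕ) (d : Desc) : Eff → Eff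
| .tvar b => if b = a then (match d with | .eff e => e | .ty _ => .tvar b) else .tvar b
| .uvar x => .uvar x
| .pure => .pure
| .join e₁ e₂ => .join (e₁.substC a d) (e₂.substC a d)

/-- Capturing substitution of a descriptor for a type variable, in types:
free occurrences of the variable are replaced literally, no binder is renamed. -/
def Ty.substC (a : ℕ) (d : Desc) : Ty → Ty
| .tvar b => if b = a then (match d with | .ty t => t | .eff _ => .tvar b) else .tvar b
| .uvar x => .uvar x
| .int => .int
| .arrow t₁ e t₂ => .arrow (t₁.substC a d) (e.substC a d) (t₂.substC a d)
| .all b k t => if b = a then .all b k t else .all b k (t.substC a d)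

/-- Capturing renaming of a type variable in effects. -/
def Eff.ren (a b : ℕ) : Eff → Eff := Eff.substC a (.eff (.tvar b))

/-- Capturing renaming of a type variable in types. -/
def Ty.ren (a b : ℕ) : Ty → Ty
| .tvar c => if c = a then .tvar b else .tvar c
| .uvar x => .uvar x
| .int => .int
| .arrow t₁ e t₂ => .arrow (t₁.ren a b) (e.ren a b) (t₂.ren a b)
| .all c k t => if c = a then .all c k t else .all c k (t.ren a b)

/-- Capturing substitution of a descriptor for a unification variable, in effects. -/
def Eff.substU (x : ℕ) (d : Desc) : Eff → Eff
| .tvar a => .tvar a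
| .uvar y => if y = x then (match d with | .eff e => e | .ty _ => .uvar y) else .uvar y
| .pure => .pure
| .join e₁ e₂ => .join (e₁.substU x d) (e₂.substU x d)

/-- Capturing substitution of a descriptor for a unification variable, in types:
no binder is renamed, so bound variables may capture free variables of the
substituted descriptor. -/
def Ty.substU (x : ℕ) (d : Desc) : Ty → Ty
| .tvar a => .tvar a
| .uvar y => if y = x then (match d with | .ty t => t | .eff _ => .uvar y) else .uvar y
| .int => .int
| .arrow t₁ e t₂ => .arrow (t₁.substU x d) (e.substU x d) (t₂.substU x d)
| .all a k t => .all a k (t.substU x d)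

/-- Substitutions mapping unification variables to descriptors. -/
abbrev Subst := ℕ → Option Desc

def idSubst : Subst := fun _ => none

def Subst.single (x : ℕ) (d : Desc) : Subst := fun y => if y = x then some d else none

def Eff.applyS (θ : Subst) : Eff → Eff
| .tvar a => .tvar a
| .uvar x => match θ x with | some (.eff e) => e | _ => .uvar x
| .pure => .pure
| .join e₁ e₂ => .join (e₁.applyS θ) (e₂.applyS θ)

def Ty.applyS (θ : Subst) : Ty → Ty
| .tvar a => .tvar a
| .uvar x => match θ x with | some (.ty t) => t | _ => .uvar x
| .int => .int
| .arrow t₁ e t₂ => .arrow (t₁.applyS θ) (e.applyS θ) (t₂.applyS θ)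
| .all a k t => .all a k (t.applyS θ)

def Desc.applyS (θ : Subst) : Desc → Desc
| .ty t => .ty (t.applyS θ)
| .eff e => .eff (e.applyS θ)

def Subst.comp (θ₂ θ₁ : Subst) : Subst :=
  fun x => match θ₁ x with
  | some d => some (d.applyS θ₂)
  | none => θ₂ x

def Env.applyS (θ : Subst) : Env → Env :=
  List.map (fun en => match en with
    | Entry.kind a k => Entry.kind a k
    | Entry.var x t => Entry.var x (t.applyS θ))

/-- Effect equivalence: least congruence containing the laws of an idempotent
commutative monoid with identity ∅ and operation ∪. -/
inductive EffEquiv : Eff → Eff → Prop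
| refl (e) : EffEquiv e e
| symm {e₁ e₂} : EffEquiv e₁ e₂ → EffEquiv e₂ e₁
| trans {e₁ e₂ e₃} : EffEquiv e₁ e₂ → EffEquiv e₂ e₃ → EffEquiv e₁ e₃
| congr {e₁ e₁' e₂ e₂'} : EffEquiv e₁ e₁' → EffEquiv e₂ e₂' →
    EffEquiv (.join e₁ e₂) (.join e₁' e₂')
| assoc (e₁ e₂ e₃) : EffEquiv (.join (.join e₁ e₂) e₃) (.join e₁ (.join e₂ e₃))
| comm (e₁ e₂) : EffEquiv (.join e₁ e₂) (.join e₂ e₁)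
| idem (e) : EffEquiv (.join e e) e
| pureId (e) : EffEquiv (.join .pure e) e

/-- Type equivalence (α-equivalence): least congruence respecting effect
equivalence in arrows and allowing renaming of ∀-bound variables. -/
inductive TyEquiv : Ty → Ty → Prop
| refl (t) : TyEquiv t t
| symm {t₁ t₂} : TyEquiv t₁ t₂ → TyEquiv t₂ t₁
| trans {t₁ t₂ t₃} : TyEquiv t₁ t₂ → TyEquiv t₂ t₃ → TyEquiv t₁ t₃
| arrow {t₁ t₁' t₂ t₂' e e'} : TyEquiv t₁ t₁' → EffEquiv e e' → TyEquiv t₂ t₂' →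
    TyEquiv (.arrow t₁ e t₂) (.arrow t₁' e' t₂')
| all {t t'} (a : ℕ) (k : Kind) : TyEquiv t t' → TyEquiv (.all a k t) (.all a k t')
| alpha {t : Ty} (a b : ℕ) (k : Kind) : b ∉ t.fv → b ∉ t.bv →
    TyEquiv (.all a k t) (.all b k (t.ren a b))

/-- Monomorphic types. -/
inductive Mono : Ty → Prop
| tvar (a : ℕ) : Mono (.tvar a)
| uvar (x : ℕ) : Mono (.uvar x)
| int : Mono .int
| arrow {t₁ t₂ : Ty} (e : Eff) : Mono t₁ → Mono t₂ → Mono (.arrow t₁ e t₂)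

/-- Kinding judgment Γ ⊢ δ : κ. -/
inductive Kinding : Env → Desc → Kind → Prop
| varTy {Γ a} : lookupKind Γ a = some .type → Kinding Γ (.ty (.tvar a)) .type
| varEff {Γ a} : lookupKind Γ a = some .effect → Kinding Γ (.eff (.tvar a)) .effect
| int {Γ} : Kinding Γ (.ty .int) .type
| arrow {Γ t₁ t₂ e} : Kinding Γ (.ty t₁) .type → Kinding Γ (.ty t₂) .type →
    Kinding Γ (.eff e) .effect → Kinding Γ (.ty (.arrow t₁ e t₂)) .type
| all {Γ a k t} : Kinding (Entry.kind a k :: Γ) (.ty t) .type →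
    Kinding Γ (.ty (.all a k t)) .type
| pure {Γ} : Kinding Γ (.eff .pure) .effect
| join {Γ e₁ e₂} : Kinding Γ (.eff e₁) .effect → Kinding Γ (.eff e₂) .effect →
    Kinding Γ (.eff (.join e₁ e₂)) .effect

def Desc.tyOr (d : Desc) (t : Ty) : Ty :=
  match d with
  | .ty t' => t'
  | .eff _ => t

/-- Capture-avoiding substitution of a descriptor for a type variable, as a
relation: {a ↦ d} τ = τ', with binders renamed as needed to avoid capture. -/
inductive SubstCA (a : ℕ) (d : Desc) : Ty → Ty → Prop
| tvar_eq : SubstCA a d (.tvar a) (d.tyOr (.tvar a))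
| tvar_ne {b} : b ≠ a → SubstCA a d (.tvar b) (.tvar b)
| uvar (x) : SubstCA a d (.uvar x) (.uvar x)
| int : SubstCA a d .int .int
| arrow {t₁ t₁' t₂ t₂' e} : SubstCA a d t₁ t₁' → SubstCA a d t₂ t₂' →
    SubstCA a d (.arrow t₁ e t₂) (.arrow t₁' (e.substC a d) t₂')
| all_eq {k t} : SubstCA a d (.all a k t) (.all a k t)
| all_ne {b k t t'} : b ≠ a → b ∉ d.fv → SubstCA a d t t' →
    SubstCA a d (.all b k t) (.all b k t')
| all_ren {b c k t t'} : b ≠ a → c ≠ a → c ∉ d.fv → c ∉ t.fv → c ∉ t.bv →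
    SubstCA a d (t.ren b c) t' → SubstCA a d (.all b k t) (.all c k t')

/-- The declarative type system (with the restored well-formedness premises),
including the rules for unannotated lambdas, integer literals and let-bindings. -/
inductive Typing : Env → Expr → Ty → Eff → Prop
| var {Γ x τ} : lookupVar Γ x = some τ → Typing Γ (.var x) τ .pure
| lit {Γ n} : Typing Γ (.lit n) .int .pure
| lam {Γ x τ₁ τ₂ e ε} : Kinding Γ (.ty τ₁) .type →
    Typing (Entry.var x τ₁ :: Γ) e τ₂ ε →
    Typing Γ (.lam x τ₁ e) (.arrow τ₁ ε τ₂) .pure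
| lamU {Γ x τ₁ τ₂ e ε} : Kinding Γ (.ty τ₁) .type → Mono τ₁ →
    Typing (Entry.var x τ₁ :: Γ) e τ₂ ε →
    Typing Γ (.lamU x e) (.arrow τ₁ ε τ₂) .pure
| app {Γ e₁ e₂ τ₁ τ₂ ε ε₁ ε₂} : Typing Γ e₁ (.arrow τ₂ ε τ₁) ε₁ →
    Typing Γ e₂ τ₂ ε₂ →
    Typing Γ (.app e₁ e₂) τ₁ (.join ε₁ (.join ε₂ ε))
| lamD {Γ a k e τ} : Typing (Entry.kind a k :: Γ) e τ .pure →
    Typing Γ (.lamD a k e) (.all a k τ) .pure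
| appD {Γ e a k τ τ' δ ε} : Typing Γ e (.all a k τ) ε → Kinding Γ δ k →
    SubstCA a δ τ τ' → Typing Γ (.appD e δ) τ' ε
| elet {Γ x e₁ e₂ τ₁ τ₂ ε₁ ε₂} : Typing Γ e₁ τ₁ ε₁ →
    Typing (Entry.var x τ₁ :: Γ) e₂ τ₂ ε₂ →
    Typing Γ (.elet x e₁ e₂) τ₂ (.join ε₁ ε₂)
| conv {Γ e τ₁ τ₂ ε₁ ε₂} : Typing Γ e τ₁ ε₁ → TyEquiv τ₁ τ₂ → EffEquiv ε₁ ε₂ →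
    Typing Γ e τ₂ ε₂

/-- The simplified declarative type system: the system of the figure without
the rule T-LamU (and without let-bindings). -/
inductive TypingND : Env → Expr → Ty → Eff → Prop
| var {Γ x τ} : lookupVar Γ x = some τ → TypingND Γ (.var x) τ .pure
| lit {Γ n} : TypingND Γ (.lit n) .int .pure
| lam {Γ x τ₁ τ₂ e ε} : Kinding Γ (.ty τ₁) .type →
    TypingND (Entry.var x τ₁ :: Γ) e τ₂ ε →
    TypingND Γ (.lam x τ₁ e) (.arrow τ₁ ε τ₂) .pure
| app {Γ e₁ e₂ τ₁ τ₂ ε ε₁ ε₂} : TypingND Γ e₁ (.arrow τ₂ ε τ₁) ε₁ →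
    TypingND Γ e₂ τ₂ ε₂ →
    TypingND Γ (.app e₁ e₂) τ₁ (.join ε₁ (.join ε₂ ε))
| lamD {Γ a k e τ} : TypingND (Entry.kind a k :: Γ) e τ .pure →
    TypingND Γ (.lamD a k e) (.all a k τ) .pure
| appD {Γ e a k τ τ' δ ε} : TypingND Γ e (.all a k τ) ε → Kinding Γ δ k →
    SubstCA a δ τ τ' → TypingND Γ (.appD e δ) τ' ε
| conv {Γ e τ₁ τ₂ ε₁ ε₂} : TypingND Γ e τ₁ ε₁ → TyEquiv τ₁ τ₂ → EffEquiv ε₁ ε₂ →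
    TypingND Γ e τ₂ ε₂

/-- τ has locally unique bound variables w.r.t. a domain of variables:
no binder in τ shadows another binder of τ, and no binder is in the domain. -/
def luTy (dom : Finset ℕ) : Ty → Prop
| .tvar _ => True
| .uvar _ => True
| .int => True
| .arrow t₁ _ t₂ => luTy dom t₁ ∧ luTy dom t₂
| .all a _ t => a ∉ dom ∧ luTy (insert a dom) t

def luDesc (dom : Finset ℕ) : Desc → Prop
| .ty t => luTy dom t
| .eff _ => True

/-- An environment has locally unique bound variables w.r.t. itself. -/
def luEnv (Γ : Env) : Prop := ∀ x τ, Entry.var x τ ∈ Γ → luTy Γ.kdom τ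

/-- e has globally unique bound variables w.r.t. a domain: every binder occurs
at most once in e and no binder is in the domain. -/
def guExpr (dom : Finset ℕ) (e : Expr) : Prop :=
  e.bv.Nodup ∧ ∀ a ∈ e.bv, a ∉ dom

/-- The simple type inference algorithm (for the calculus without unannotated
lambdas), using capturing substitution in the type application case. -/
inductive SInfer : Env → Expr → Ty → Eff → Prop
| var {Γ x τ} : lookupVar Γ x = some τ → SInfer Γ (.var x) τ .pure
| lit {Γ n} : SInfer Γ (.lit n) .int .pure
| lam {Γ x τ τ' e ε} : Kinding Γ (.ty τ) .type →
    SInfer (Entry.var x τ :: Γ) e τ' ε →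
    SInfer Γ (.lam x τ e) (.arrow τ ε τ') .pure
| app {Γ e₁ e₂ τa τ₁ τ₂ ε ε₁ ε₂} : SInfer Γ e₁ (.arrow τa ε τ₁) ε₁ →
    SInfer Γ e₂ τ₂ ε₂ → TyEquiv τa τ₂ →
    SInfer Γ (.app e₁ e₂) τ₁ (.join ε₁ (.join ε₂ ε))
| lamD {Γ a k e τ ε} : SInfer (Entry.kind a k :: Γ) e τ ε → EffEquiv ε .pure →
    SInfer Γ (.lamD a k e) (.all a k τ) .pure
| appD {Γ e a k τ δ ε} : SInfer Γ e (.all a k τ) ε → Kinding Γ δ k →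
    SInfer Γ (.appD e δ) (τ.substC a δ) ε

/-- The algebraic unification algorithm, as a relation. In the ∀-case a fresh
variable is chosen and both bound variables are renamed to it (capturing
renaming). Effect unification is delayed into constraints. -/
inductive Unify : Ty → Ty → Subst → List (Eff × Eff) → Prop
| tvar (a) : Unify (.tvar a) (.tvar a) idSubst []
| int : Unify .int .int idSubst []
| uvarRefl (x) : Unify (.uvar x) (.uvar x) idSubst []
| uvarL {x τ} : x ∉ τ.fuv → Mono τ → Unify (.uvar x) τ (Subst.single x (.ty τ)) []
| uvarR {x τ} : x ∉ τ.fuv → Mono τ → Unify τ (.uvar x) (Subst.single x (.ty τ)) []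
| arrow {t₁ t₂ t₁' t₂' e₁ e₂ θ₁ θ₂ C₁ C₂} :
    Unify t₁ t₂ θ₁ C₁ →
    Unify (t₁'.applyS θ₁) (t₂'.applyS θ₁) θ₂ C₂ →
    Unify (.arrow t₁ e₁ t₁') (.arrow t₂ e₂ t₂') (θ₂.comp θ₁)
      (C₁ ++ C₂ ++ [(e₁, e₂)])
| all {a₁ a₂ b k t₁ t₂ θ C} :
    b ∉ t₁.fv ∪ t₂.fv → b ∉ t₁.bv → b ∉ t₂.bv →
    Unify (t₁.ren a₁ b) (t₂.ren a₂ b) θ C →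
    Unify (.all a₁ k t₁) (.all a₂ k t₂) θ C

/-- Models: partial maps from effect unification variables to effects. -/
abbrev EModel := ℕ → Option Eff

/-- The identity substitution, as a model. -/
def idModel : EModel := fun _ => none

def Eff.applyM (μ : EModel) : Eff → Eff
| .tvar a => .tvar a
| .uvar x => (μ x).getD (.uvar x)
| .pure => .pure
| .join e₁ e₂ => .join (e₁.applyM μ) (e₂.applyM μ)

def Ty.applyM (μ : EModel) : Ty → Ty
| .tvar a => .tvar a
| .uvar x => .uvar x
| .int => .int
| .arrow t₁ e t₂ => .arrow (t₁.applyM μ) (e.applyM μ) (t₂.applyM μ)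
| .all a k t => .all a k (t.applyM μ)

/-- A model maps (effect) unification variables to ground effects. -/
def IsModel (μ : EModel) : Prop := ∀ x e, μ x = some e → Eff.fuv e = ∅

/-- μ ⊨ C : the model equates both sides of every constraint up to
effect equivalence. -/
def Models (μ : EModel) (C : List (Eff × Eff)) : Prop :=
  ∀ p ∈ C, EffEquiv (Eff.applyM μ p.1) (Eff.applyM μ p.2)

/-- Atomic identifiers (type variables and unification variables) of an effect. -/
def Eff.ids : Eff → Finset (ℕ ⊕ ℕ)
| .tvar a => {Sum.inl a}
| .uvar x => {Sum.inr x}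
| .pure => ∅
| .join e₁ e₂ => e₁.ids ∪ e₂.ids

/-- Free identifiers (type variables and unification variables) of a type. -/
def Ty.ids : Ty → Finset (ℕ ⊕ ℕ)
| .tvar a => {Sum.inl a}
| .uvar x => {Sum.inr x}
| .int => ∅
| .arrow t₁ e t₂ => t₁.ids ∪ e.ids ∪ t₂.ids
| .all a _ t => t.ids \ {Sum.inl a}

def constrIds (C : List (Eff × Eff)) : Finset (ℕ ⊕ ℕ) :=
  C.foldr (fun p s => p.1.ids ∪ p.2.ids ∪ s) ∅

/-- Free identifiers of an environment (domain of kind assignments and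
identifiers of assigned types). -/
def Env.ids : Env → Finset (ℕ ⊕ ℕ)
| [] => ∅
| Entry.kind a _ :: Γ => insert (Sum.inl a) (Env.ids Γ)
| Entry.var _ t :: Γ => t.ids ∪ Env.ids Γ

/-- Map identifiers of an effect through a function. -/
def Eff.mapIds (g : ℕ ⊕ ℕ → Eff) : Eff → Eff
| .tvar a => g (Sum.inl a)
| .uvar x => g (Sum.inr x)
| .pure => .pure
| .join e₁ e₂ => .join (e₁.mapIds g) (e₂.mapIds g)

/-- The Jouvelot–Gifford type-and-effect reconstruction algorithm, as a
relation R(Γ, e) = (τ, ε, θ, C); freshness of generated variables is expressed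
relative to the data available at the corresponding point. -/
inductive RInfer : Env → Expr → Ty → Eff → Subst → List (Eff × Eff) → Prop
| var {Γ x τ} : lookupVar Γ x = some τ → RInfer Γ (.var x) τ .pure idSubst []
| lit {Γ n} : RInfer Γ (.lit n) .int .pure idSubst []
| lam {Γ x τ τ' e ε θ C} : Kinding Γ (.ty τ) .type →
    RInfer (Entry.var x τ :: Γ) e τ' ε θ C →
    RInfer Γ (.lam x τ e) (.arrow τ ε τ') .pure θ C
| lamU {Γ x z e τ ε θ C} :
    Sum.inr z ∉ Env.ids Γ →
    RInfer (Entry.var x (.uvar z) :: Γ) e τ ε θ C →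
    RInfer Γ (.lamU x e) (.arrow (Ty.applyS θ (.uvar z)) ε τ) .pure θ C
| app {Γ e₁ e₂ τ₁ τ₂ ε₁ ε₂ θ₁ θ₂ θ₃ C₁ C₂ C₃ xt xe} :
    RInfer Γ e₁ τ₁ ε₁ θ₁ C₁ →
    RInfer (Env.applyS θ₁ Γ) e₂ τ₂ ε₂ θ₂ C₂ →
    xt ≠ xe →
    Sum.inr xt ∉ Env.ids Γ ∪ τ₁.ids ∪ τ₂.ids ∪ ε₁.ids ∪ ε₂.ids ∪ constrIds C₁ ∪ constrIds C₂ →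
    Sum.inr xe ∉ Env.ids Γ ∪ τ₁.ids ∪ τ₂.ids ∪ ε₁.ids ∪ ε₂.ids ∪ constrIds C₁ ∪ constrIds C₂ →
    Unify (τ₁.applyS θ₂) (.arrow τ₂ (.uvar xe) (.uvar xt)) θ₃ C₃ →
    RInfer Γ (.app e₁ e₂) (Ty.applyS θ₃ (.uvar xt))
      (.join ε₁ (.join ε₂ (.uvar xe))) ((θ₃.comp θ₂).comp θ₁) (C₁ ++ C₂ ++ C₃)
| lamD {Γ a k e τ ε θ C C' b} {f : ℕ ⊕ ℕ → ℕ} {g : ℕ ⊕ ℕ → Eff} :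
    RInfer (Entry.kind a k :: Γ) e τ ε θ C →
    C' = (ε, Eff.pure) :: C →
    Sum.inl b ∉ constrIds C' ∪ Env.ids (Env.applyS θ (Entry.kind a k :: Γ)) ∪ τ.ids →
    (∀ i ∈ constrIds C' \ Env.ids (Env.applyS θ (Entry.kind a k :: Γ)),
      Sum.inr (f i) ∉ constrIds C' ∪ Env.ids (Env.applyS θ (Entry.kind a k :: Γ)) ∪ τ.ids) →
    Set.InjOn f ↑(constrIds C' \ Env.ids (Env.applyS θ (Entry.kind a k :: Γ))) →
    g = (fun i => if i = Sum.inl a then Eff.tvar b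
      else if i ∈ constrIds C' \ Env.ids (Env.applyS θ (Entry.kind a k :: Γ))
        then Eff.uvar (f i)
        else match i with | Sum.inl t => Eff.tvar t | Sum.inr u => Eff.uvar u) →
    RInfer Γ (.lamD a k e) (.all a k τ) .pure θ
      ((C'.map (fun p => (Eff.mapIds g p.1, Eff.mapIds g p.2))) ++ C')
| appD {Γ e a k τ ε θ C δ} :
    RInfer Γ e (.all a k τ) ε θ C →
    Kinding Γ δ k →
    RInfer Γ (.appD e δ) (τ.substC a δ) ε θ
      (C.map (fun p => (p.1.substC a δ, p.2.substC a δ)))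

/-- ∀-free types. -/
def noForall : Ty → Prop
| .all _ _ _ => False
| .arrow t₁ _ t₂ => noForall t₁ ∧ noForall t₂
| _ => True

/-!
Induct on the derivation of `{α ↦ δ}τ = τ'`. The two substitutions can only differ where the
capture-avoiding one renames a binder `∀β` to `∀γ`; there they agree up to α-equivalence as soon
as `β` is not free in `δ`, because renaming both `∀β.[α ↦ δ]τ₀` and `∀γ.[α ↦ δ](τ₀[β ↦ γ])` to a
common fresh binder yields the same body. Local uniqueness of the binders of `τ` with respect to
`Γ, α:κ`, together with `fv δ ⊆ dom Γ` from the kinding of `δ`, guarantees this for every binder.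
-/

namespace Eff

@[simp]
lemma ren_tvar (x b c : ℕ) : (tvar x).ren b c = if x = b then tvar c else tvar x := by
  by_cases hx : x = b <;> simp [ren, substC, hx]

@[simp]
lemma ren_join (e₁ e₂ : Eff) (b c : ℕ) : (join e₁ e₂).ren b c = join (e₁.ren b c) (e₂.ren b c) :=
  rfl

lemma ren_eq_self {b c : ℕ} {e : Eff} (h : b ∉ e.fv) : e.ren b c = e := by
  induction e with
  | tvar x => simp_all [fv, Ne.symm]
  | uvar | pure => rfl
  | join e₁ e₂ ih₁ ih₂ => simp_all [fv]

lemma notMem_fv_ren {x b c : ℕ} {e : Eff} (h : x ∉ e.fv) (hxc : x ≠ c) :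
    x ∉ (e.ren b c).fv := by
  induction e with
  | tvar y => by_cases hy : y = b <;> simp_all [fv]
  | uvar | pure => exact h
  | join e₁ e₂ ih₁ ih₂ => simp_all [fv]

lemma notMem_fv_substC {x a : ℕ} {d : Desc} {e : Eff} (h : x ∉ e.fv) (hd : x ∉ d.fv) :
    x ∉ (e.substC a d).fv := by
  induction e with
  | tvar y => cases d <;> by_cases hy : y = a <;> simp_all [substC, fv, Desc.fv]
  | uvar | pure => exact h
  | join e₁ e₂ ih₁ ih₂ => simp_all [substC, fv]

lemma substC_ren_comm {a b c : ℕ} {d : Desc} (hba : b ≠ a) (hca : c ≠ a) (hbd : b ∉ d.fv)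
    (e : Eff) : (e.ren b c).substC a d = (e.substC a d).ren b c := by
  induction e with
  | tvar x =>
    by_cases hxb : x = b
    · simp [substC, hxb, hba, hca]
    · by_cases hxa : x = a
      · cases d <;> simp_all [substC, Desc.fv, ren_eq_self]
      · simp [substC, hxb, hxa]
  | uvar | pure => rfl
  | join e₁ e₂ ih₁ ih₂ => simp_all [substC]

lemma ren_ren {b c c₂ : ℕ} {e : Eff} (hc : c ∉ e.fv) : (e.ren b c).ren c c₂ = e.ren b c₂ := by
  induction e with
  | tvar x => by_cases hx : x = b <;> simp_all [fv, Ne.symm]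
  | uvar | pure => rfl
  | join e₁ e₂ ih₁ ih₂ => simp_all [fv]

end Eff

namespace Ty

lemma ren_eq_self {b c : ℕ} {t : Ty} (h : b ∉ t.fv) : t.ren b c = t := by
  induction t with
  | tvar x => simp_all [ren, fv, Ne.symm]
  | uvar | int => rfl
  | arrow t₁ e t₂ ih₁ ih₂ => simp_all [ren, fv, Eff.ren_eq_self]
  | all d k t ih => by_cases hd : b = d <;> simp_all [ren, fv, Ne.symm]

lemma bv_ren (b c : ℕ) (t : Ty) : (t.ren b c).bv = t.bv := by
  induction t with
  | tvar x => by_cases hx : x = b <;> simp [ren, bv, hx]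
  | uvar | int => rfl
  | arrow t₁ e t₂ ih₁ ih₂ => simp [ren, bv, ih₁, ih₂]
  | all d k t ih => by_cases hd : d = b <;> simp [ren, bv, hd, ih]

lemma notMem_fv_ren {x b c : ℕ} {t : Ty} (h : x ∉ t.fv) (hxc : x ≠ c) :
    x ∉ (t.ren b c).fv := by
  induction t with
  | tvar y => by_cases hy : y = b <;> simp_all [ren, fv]
  | uvar | int => exact h
  | arrow t₁ e t₂ ih₁ ih₂ => simp_all [ren, fv, Eff.notMem_fv_ren]
  | all d k t ih => by_cases hd : d = b <;> by_cases hxd : x = d <;> simp_all [ren, fv]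

lemma notMem_fv_substC {x a : ℕ} {d : Desc} {t : Ty} (h : x ∉ t.fv) (hd : x ∉ d.fv) :
    x ∉ (t.substC a d).fv := by
  induction t with
  | tvar y => cases d <;> by_cases hy : y = a <;> simp_all [substC, fv, Desc.fv]
  | uvar | int => exact h
  | arrow t₁ e t₂ ih₁ ih₂ => simp_all [substC, fv, Eff.notMem_fv_substC]
  | all b k t ih => by_cases hb : b = a <;> by_cases hxb : x = b <;> simp_all [substC, fv]

lemma notMem_bv_substC {x a : ℕ} {d : Desc} {t : Ty} (h : x ∉ t.bv) (hd : x ∉ d.bv) :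
    x ∉ (t.substC a d).bv := by
  induction t with
  | tvar y => cases d <;> by_cases hy : y = a <;> simp_all [substC, bv, Desc.bv]
  | uvar | int => exact h
  | arrow t₁ e t₂ ih₁ ih₂ => simp_all [substC, bv]
  | all b k t ih => by_cases hb : b = a <;> simp_all [substC, bv]

lemma substC_ren_comm {a b c : ℕ} {d : Desc} (hba : b ≠ a) (hca : c ≠ a) (hbd : b ∉ d.fv)
    (t : Ty) : (t.ren b c).substC a d = (t.substC a d).ren b c := by
  induction t with
  | tvar x =>
    by_cases hxb : x = b
    · simp [ren, substC, hxb, hba, hca]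
    · by_cases hxa : x = a
      · cases d <;> simp_all [ren, substC, Desc.fv, ren_eq_self]
      · simp [ren, substC, hxb, hxa]
  | uvar | int => rfl
  | arrow t₁ e t₂ ih₁ ih₂ => simp_all [ren, substC, Eff.substC_ren_comm]
  | all x k t ih => by_cases hxb : x = b <;> by_cases hxa : x = a <;> simp_all [ren, substC]

lemma ren_ren {b c c₂ : ℕ} {t : Ty} (hc : c ∉ t.fv) (hcb : c ∉ t.bv) :
    (t.ren b c).ren c c₂ = t.ren b c₂ := by
  induction t with
  | tvar x => by_cases hx : x = b <;> simp_all [ren, fv, Ne.symm]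
  | uvar | int => rfl
  | arrow t₁ e t₂ ih₁ ih₂ => simp_all [ren, fv, bv, Eff.ren_ren]
  | all d k t ih =>
    by_cases hd : d = b <;> simp_all [ren, fv, bv, ren_eq_self, Ne.symm]

end Ty

namespace TyEquiv

lemma all_of_ren_eq {b c c₂ : ℕ} {k : Kind} {u v : Ty} (hu : c₂ ∉ u.fv) (hu' : c₂ ∉ u.bv)
    (hv : c₂ ∉ v.fv) (hv' : c₂ ∉ v.bv) (h : u.ren b c₂ = v.ren c c₂) :
    TyEquiv (.all b k u) (.all c k v) :=
  (alpha b c₂ k hu hu').trans (h ▸ (alpha c c₂ k hv hv').symm)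

lemma all_substC_ren {a b c : ℕ} {k : Kind} {d : Desc} {t : Ty} (hba : b ≠ a) (hca : c ≠ a)
    (hbd : b ∉ d.fv) (hcd : c ∉ d.fv) (hct : c ∉ t.fv) (hctb : c ∉ t.bv) :
    TyEquiv (.all b k (t.substC a d)) (.all c k ((t.ren b c).substC a d)) := by
  obtain ⟨c₂, hc₂⟩ := Infinite.exists_notMem_finset
    (t.fv ∪ d.fv ∪ (t.bv ++ d.bv).toFinset ∪ {a, c})
  simp only [Finset.mem_union, List.mem_toFinset, List.mem_append, Finset.mem_insert,
    Finset.mem_singleton, not_or] at hc₂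
  obtain ⟨⟨⟨hc₂t, hc₂d⟩, hc₂tb, hc₂db⟩, hc₂a, hc₂c⟩ := hc₂
  refine all_of_ren_eq (c₂ := c₂) (Ty.notMem_fv_substC hc₂t hc₂d)
    (Ty.notMem_bv_substC hc₂tb hc₂db) (Ty.notMem_fv_substC (Ty.notMem_fv_ren hc₂t hc₂c) hc₂d)
    (Ty.notMem_bv_substC (by rwa [Ty.bv_ren]) hc₂db) ?_
  rw [← Ty.substC_ren_comm hba hc₂a hbd, ← Ty.substC_ren_comm hca hc₂a hcd,
    Ty.ren_ren hct hctb]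

end TyEquiv

theorem SubstCA.tyEquiv_substC {a : ℕ} {δ : Desc} {τ τ' : Ty} (h : SubstCA a δ τ τ')
    (hbv : ∀ x ∈ τ.bv, x ∉ δ.fv) : TyEquiv τ' (τ.substC a δ) := by
  induction h with
  | tvar_eq => cases δ <;> simp only [Ty.substC, Desc.tyOr, if_true] <;> exact .refl _
  | tvar_ne hb => simp only [Ty.substC, if_neg hb]; exact .refl _
  | uvar | int => exact .refl _
  | arrow _ _ ih₁ ih₂ =>
    simp only [Ty.bv, List.mem_append] at hbv
    exact .arrow (ih₁ fun x hx => hbv x (.inl hx)) (.refl _) (ih₂ fun x hx => hbv x (.inr hx))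
  | all_eq => simp only [Ty.substC, if_true]; exact .refl _
  | @all_ne b k t t' hba _ _ ih =>
    rw [Ty.substC, if_neg hba]
    exact .all b k (ih fun x hx => hbv x (List.mem_cons_of_mem b hx))
  | @all_ren b c k t t' hba hca hcd hct hctb _ ih =>
    rw [Ty.substC, if_neg hba]
    have ih' := ih fun x hx => hbv x (List.mem_cons_of_mem b (by rwa [Ty.bv_ren] at hx))
    exact (TyEquiv.all c k ih').trans
      (TyEquiv.all_substC_ren hba hca (hbv b List.mem_cons_self) hcd hct hctb).symm

lemma luTy.notMem_bv {s : Finset ℕ} {x : ℕ} {t : Ty} (h : luTy s t) (hx : x ∈ s) :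
    x ∉ t.bv := by
  induction t generalizing s with
  | tvar | uvar | int => simp [Ty.bv]
  | arrow t₁ e t₂ ih₁ ih₂ => simpa [Ty.bv] using ⟨ih₁ h.1 hx, ih₂ h.2 hx⟩
  | all d k t ih =>
    simp only [Ty.bv, List.mem_cons, not_or]
    exact ⟨fun hxd => h.1 (hxd ▸ hx), ih h.2 (Finset.mem_insert_of_mem hx)⟩

lemma mem_kdom_of_lookupKind_eq_some {Γ : Env} {x : ℕ} {k : Kind}
    (h : lookupKind Γ x = some k) : x ∈ Γ.kdom := by
  induction Γ with
  | nil => simp [lookupKind] at h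
  | cons en Γ ih =>
    cases en with
    | kind b _ => by_cases hx : x = b <;> simp_all [lookupKind, Env.kdom]
    | var => exact ih h

lemma Kinding.fv_subset_kdom {Γ : Env} {d : Desc} {k : Kind} (h : Kinding Γ d k) :
    d.fv ⊆ Γ.kdom := by
  induction h with
  | varTy h | varEff h => simpa [Desc.fv, Ty.fv, Eff.fv] using mem_kdom_of_lookupKind_eq_some h
  | int | pure => simp [Desc.fv, Ty.fv, Eff.fv]
  | arrow _ _ _ ih₁ ih₂ ih₃ =>
    simp only [Desc.fv, Ty.fv] at *
    exact Finset.union_subset (Finset.union_subset ih₁ ih₃) ih₂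
  | all _ ih =>
    simp only [Desc.fv, Ty.fv, Env.kdom] at *
    exact Finset.subset_insert_iff.1 ih
  | join _ _ ih₁ ih₂ =>
    simp only [Desc.fv, Eff.fv] at *
    exact Finset.union_subset ih₁ ih₂

/-- If τ has locally unique bound variables w.r.t. Γ, α:κ and
Γ ⊢ δ : κ, then the capture-avoiding substitution {α ↦ δ}τ is α-equivalent to
the capturing substitution [α ↦ δ]τ. -/
theorem substCA_equiv_substC (Γ : Env) (a : ℕ) (κ : Kind) (δ : Desc) (τ τ' : Ty)
    (hlu : luTy (Env.kdom (Entry.kind a κ :: Γ)) τ)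
    (hκ : Kinding Γ δ κ)
    (hca : SubstCA a δ τ τ') :
    TyEquiv τ' (Ty.substC a δ τ) := by
  refine hca.tyEquiv_substC fun x hx hxδ => hlu.notMem_bv ?_ hx
  exact Finset.mem_insert_of_mem (hκ.fv_subset_kdom hxδ)
end

section
/- If the simple type inference algorithm (without unification variables) succeeds on input (Γ, e) returning (τ, ε), and the inputs satisfy: e has globally unique bound variables w.r.t. Γ, Γ has locally unique bound variables w.r.t. itself, and Γ and e have disjoint sets of bound variables, then τ has locally unique bound variables w.r.t. Γ, and every bound variable of τ is bound in e or in Γ. -/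
/-!
Induction on the inference derivation, carrying along that every binder of the inferred type
is bound in `e` or in `Γ`. Binders can only start to clash in two places. Under `Λα`, the types
of `Γ` stay locally unique w.r.t. the domain enlarged by `α`, since `α` is bound in `e` and hence
not in `Γ`. At a type application `[α ↦ δ]τ`, the binders of `δ` are bound in `e`, so by global
uniqueness they are bound neither elsewhere in `e` nor in `Γ`: they avoid both the domain and the
binders of `τ`, and the substitution puts no binder under one of the same name.
-/

theorem lookupVar_mem : ∀ {Γ : Env} {x : ℕ} {τ : Ty}, lookupVar Γ x = some τ → Entry.var x τ ∈ Γ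
  | Entry.var y t :: Γ, x, τ, h => by
    unfold lookupVar at h
    split_ifs at h with hx
    · cases h; subst hx; exact List.mem_cons_self
    · exact List.mem_cons_of_mem _ (lookupVar_mem h)
  | Entry.kind _ _ :: _, _, _, h => List.mem_cons_of_mem _ (lookupVar_mem h)

theorem Env.bv_subset_of_mem {x : ℕ} {τ : Ty} :
    ∀ {Γ : Env}, Entry.var x τ ∈ Γ → τ.bv ⊆ Γ.bv
  | Entry.var _ _ :: Γ, h => by
    rcases List.mem_cons.mp h with h | h
    · cases h; exact List.subset_append_left _ _
    · exact List.Subset.trans (Env.bv_subset_of_mem h) (List.subset_append_right _ _)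
  | Entry.kind _ _ :: _, h => by
    rcases List.mem_cons.mp h with h | h
    · cases h
    · rw [Env.bv]; exact Env.bv_subset_of_mem h

theorem luTy_of_nodup_bv : ∀ {dom : Finset ℕ} {t : Ty}, t.bv.Nodup → (∀ a ∈ t.bv, a ∉ dom) →
    luTy dom t
  | _, .tvar _, _, _ | _, .uvar _, _, _ | _, .int, _, _ => trivial
  | _, .arrow t₁ _ t₂, hnd, hdom => by
    rw [Ty.bv, List.nodup_append'] at hnd
    exact ⟨luTy_of_nodup_bv hnd.1 fun a ha => hdom a (List.mem_append_left _ ha),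
      luTy_of_nodup_bv hnd.2.1 fun a ha => hdom a (List.mem_append_right _ ha)⟩
  | _, .all a _ t, hnd, hdom => by
    rw [Ty.bv, List.nodup_cons] at hnd
    refine ⟨hdom a List.mem_cons_self, luTy_of_nodup_bv hnd.2 fun b hb => ?_⟩
    rw [Finset.mem_insert, not_or]
    exact ⟨fun hba => hnd.1 (hba ▸ hb), hdom b (List.mem_cons_of_mem _ hb)⟩

theorem luDesc_of_nodup_bv {dom : Finset ℕ} : ∀ {d : Desc}, d.bv.Nodup → (∀ a ∈ d.bv, a ∉ dom) →
    luDesc dom d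
  | .ty _, hnd, hdom => luTy_of_nodup_bv hnd hdom
  | .eff _, _, _ => trivial

theorem luTy_insert {a : ℕ} : ∀ {dom : Finset ℕ} {t : Ty}, luTy dom t → a ∉ t.bv →
    luTy (insert a dom) t
  | _, .tvar _, _, _ | _, .uvar _, _, _ | _, .int, _, _ => trivial
  | _, .arrow _ _ _, h, ha => by
    rw [Ty.bv, List.mem_append, not_or] at ha
    exact ⟨luTy_insert h.1 ha.1, luTy_insert h.2 ha.2⟩
  | _, .all b _ _, h, ha => by
    rw [Ty.bv, List.mem_cons, not_or] at ha
    refine ⟨by simp [Ne.symm ha.1, h.1], ?_⟩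
    rw [Finset.insert_comm]
    exact luTy_insert h.2 ha.2

theorem luDesc_insert {a : ℕ} {dom : Finset ℕ} : ∀ {d : Desc}, luDesc dom d → a ∉ d.bv →
    luDesc (insert a dom) d
  | .ty _, h, ha => luTy_insert h ha
  | .eff _, _, _ => trivial

theorem luTy_anti : ∀ {dom dom' : Finset ℕ} {t : Ty}, dom ⊆ dom' → luTy dom' t → luTy dom t
  | _, _, .tvar _, _, _ | _, _, .uvar _, _, _ | _, _, .int, _, _ => trivial
  | _, _, .arrow _ _ _, hsub, h => ⟨luTy_anti hsub h.1, luTy_anti hsub h.2⟩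
  | _, _, .all a _ _, hsub, h =>
    ⟨fun ha => h.1 (hsub ha), luTy_anti (Finset.insert_subset_insert a hsub) h.2⟩

theorem Ty.bv_substC_subset (a : ℕ) (d : Desc) : ∀ t : Ty, (t.substC a d).bv ⊆ t.bv ++ d.bv
  | .tvar b => by
    unfold Ty.substC
    split_ifs
    · cases d <;> simp [Ty.bv, Desc.bv]
    · simp [Ty.bv]
  | .uvar _ | .int => by simp [Ty.substC, Ty.bv]
  | .arrow t₁ _ t₂ => by
    have h₁ := Ty.bv_substC_subset a d t₁
    have h₂ := Ty.bv_substC_subset a d t₂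
    simp only [Ty.substC, Ty.bv, List.append_subset]
    grind
  | .all b _ t => by
    have ht := Ty.bv_substC_subset a d t
    unfold Ty.substC
    split_ifs
    · exact List.subset_append_left _ _
    · simp only [Ty.bv, List.cons_subset]
      grind

theorem luTy_substC {a : ℕ} {d : Desc} : ∀ {dom : Finset ℕ} {t : Ty}, luTy dom t →
    luDesc dom d → d.bv.Disjoint t.bv → luTy dom (t.substC a d)
  | _, .tvar b, _, hd, _ => by
    unfold Ty.substC
    split_ifs
    · cases d
      · exact hd
      · trivial
    · trivial
  | _, .uvar _, _, _, _ | _, .int, _, _, _ => trivial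
  | _, .arrow _ _ _, h, hd, hdisj => by
    rw [Ty.bv, List.disjoint_append_right] at hdisj
    exact ⟨luTy_substC h.1 hd hdisj.1, luTy_substC h.2 hd hdisj.2⟩
  | _, .all b _ _, h, hd, hdisj => by
    rw [Ty.bv, List.disjoint_cons_right] at hdisj
    unfold Ty.substC
    split_ifs
    · exact h
    · exact ⟨h.1, luTy_substC h.2 (luDesc_insert hd hdisj.1) hdisj.2⟩

section guExpr

variable {dom : Finset ℕ}

theorem guExpr.of_sublist {e e' : Expr} (h : guExpr dom e) (hsub : e'.bv.Sublist e.bv) :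
    guExpr dom e' :=
  ⟨h.1.sublist hsub, fun a ha => h.2 a (hsub.subset ha)⟩

theorem guExpr.of_lam {x : ℕ} {t : Ty} {e : Expr} (h : guExpr dom (.lam x t e)) :
    luTy dom t ∧ guExpr dom e ∧ t.bv.Disjoint e.bv :=
  ⟨luTy_of_nodup_bv (h.1.sublist (List.sublist_append_left _ _))
      fun a ha => h.2 a (List.mem_append_left _ ha),
    h.of_sublist (List.sublist_append_right _ _), (List.nodup_append'.mp h.1).2.2⟩

theorem guExpr.of_lamD {a : ℕ} {k : Kind} {e : Expr} (h : guExpr dom (.lamD a k e)) :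
    a ∉ dom ∧ guExpr (insert a dom) e := by
  obtain ⟨hnd, hdom⟩ := h
  rw [Expr.bv, List.nodup_cons] at hnd
  refine ⟨hdom a List.mem_cons_self, hnd.2, fun b hb => ?_⟩
  rw [Finset.mem_insert, not_or]
  exact ⟨fun hba => hnd.1 (hba ▸ hb), hdom b (List.mem_cons_of_mem a hb)⟩

theorem guExpr.of_appD {e : Expr} {d : Desc} (h : guExpr dom (.appD e d)) :
    guExpr dom e ∧ luDesc dom d ∧ e.bv.Disjoint d.bv :=
  ⟨h.of_sublist (List.sublist_append_left _ _),
    luDesc_of_nodup_bv (h.1.sublist (List.sublist_append_right _ _))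
      fun a ha => h.2 a (List.mem_append_right _ ha),
    (List.nodup_append'.mp h.1).2.2⟩

end guExpr

theorem luEnv.cons_var {Γ : Env} {x : ℕ} {τ : Ty} (hΓ : luEnv Γ) (hτ : luTy Γ.kdom τ) :
    luEnv (Entry.var x τ :: Γ) := by
  intro y σ hmem
  rcases List.mem_cons.mp hmem with hmem | hmem
  · cases hmem; exact hτ
  · exact hΓ y σ hmem

theorem luEnv.cons_kind {Γ : Env} {a : ℕ} {k : Kind} (hΓ : luEnv Γ) (ha : a ∉ Γ.bv) :
    luEnv (Entry.kind a k :: Γ) := by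
  intro y σ hmem
  rcases List.mem_cons.mp hmem with hmem | hmem
  · cases hmem
  · exact luTy_insert (hΓ y σ hmem) fun haσ => ha (Env.bv_subset_of_mem hmem haσ)

theorem SInfer.luTy_and_bv_subset {Γ : Env} {e : Expr} {τ : Ty} {ε : Eff}
    (h : SInfer Γ e τ ε) (hgu : guExpr Γ.kdom e) (hΓ : luEnv Γ) (hdisj : Γ.bv.Disjoint e.bv) :
    luTy Γ.kdom τ ∧ τ.bv ⊆ e.bv ++ Γ.bv := by
  induction h with
  | var hx =>
    exact ⟨hΓ _ _ (lookupVar_mem hx),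
      List.Subset.trans (Env.bv_subset_of_mem (lookupVar_mem hx)) (List.subset_append_right _ _)⟩
  | lit => exact ⟨trivial, List.nil_subset _⟩
  | @lam Γ x σ τ e ε _ _ ih =>
    obtain ⟨hσ, hgu, hσe⟩ := hgu.of_lam
    rw [Expr.bv, List.disjoint_append_right] at hdisj
    obtain ⟨hτ, hτbv⟩ := ih hgu (hΓ.cons_var hσ) (List.disjoint_append_left.mpr ⟨hσe, hdisj.2⟩)
    refine ⟨⟨hσ, hτ⟩, ?_⟩
    simp only [Ty.bv, Expr.bv, Env.bv, List.append_subset] at hτbv ⊢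
    grind
  | app _ _ _ ih =>
    rw [Expr.bv, List.disjoint_append_right] at hdisj
    obtain ⟨⟨-, hτ⟩, hτbv⟩ := ih (hgu.of_sublist (List.sublist_append_left _ _)) hΓ hdisj.1
    refine ⟨hτ, ?_⟩
    simp only [Ty.bv, Expr.bv, List.append_subset] at hτbv ⊢
    grind
  | @lamD Γ a k e τ ε _ _ ih =>
    obtain ⟨ha, hgu⟩ := hgu.of_lamD
    rw [Expr.bv, List.disjoint_cons_right] at hdisj
    obtain ⟨hτ, hτbv⟩ := ih hgu (hΓ.cons_kind hdisj.1) hdisj.2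
    refine ⟨⟨ha, hτ⟩, ?_⟩
    simp only [Ty.bv, Expr.bv, Env.bv, List.cons_subset] at hτbv ⊢
    grind
  | @appD Γ e a k τ δ ε _ _ ih =>
    obtain ⟨hgu, hδ, heδ⟩ := hgu.of_appD
    rw [Expr.bv, List.disjoint_append_right] at hdisj
    obtain ⟨⟨-, hτ⟩, hτbv⟩ := ih hgu hΓ hdisj.1
    have hδτ : δ.bv.Disjoint τ.bv := fun c hcδ hcτ => by
      rcases List.mem_append.mp (hτbv (List.mem_cons_of_mem a hcτ)) with hce | hcΓ
      · exact heδ hce hcδ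
      · exact hdisj.2 hcΓ hcδ
    refine ⟨luTy_substC (luTy_anti (Finset.subset_insert a _) hτ) hδ hδτ, ?_⟩
    have hsubst := Ty.bv_substC_subset a δ τ
    simp only [Ty.bv, Expr.bv, List.cons_subset] at hτbv hsubst ⊢
    grind

/-- Invariant of the simple type inference algorithm: if the input
expression has globally unique bound variables w.r.t. Γ, the environment is
locally unique w.r.t. itself, and Γ and e have disjoint bound variables, then
the inferred type has locally unique bound variables w.r.t. Γ and all its
bound variables are bound in e or in Γ. -/
theorem sInfer_invariant (Γ : Env) (e : Expr) (τ : Ty) (ε : Eff)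
    (h : SInfer Γ e τ ε)
    (hgu : guExpr (Env.kdom Γ) e)
    (hluΓ : luEnv Γ)
    (hdisj : ∀ a, a ∈ Env.bv Γ → a ∉ e.bv) :
    luTy (Env.kdom Γ) τ ∧ ∀ a ∈ τ.bv, a ∈ e.bv ∨ a ∈ Env.bv Γ := by
  obtain ⟨hlu, hbv⟩ := h.luTy_and_bv_subset hgu hluΓ fun a => hdisj a
  exact ⟨hlu, fun a ha => List.mem_append.mp (hbv ha)⟩
end

section
/- The unification algorithm of Jouvelot and Gifford is incorrect on polymorphic types: there exist types τ₁ = ∀α:type.α and τ₂ = ∀α:type.x̂ (for a unification variable x̂) such that unify(τ₁, τ₂) succeeds returning a substitution θ and the empty constraint set, the identity substitution is a model of the empty constraint set, yet θ(τ₁) and θ(τ₂) are not equivalent types. -/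
lemma effEquiv_fv {e e' : Eff} (h : EffEquiv e e') : e.fv = e'.fv := by
  induction h <;> simp_all [Eff.fv] <;> aesop

lemma eff_ren_fv (a b : ℕ) (e : Eff) :
    (e.ren a b).fv.erase b = (e.fv.erase a).erase b := by
  induction e with
  | tvar c =>
    by_cases h : c = a
    · simp [Eff.ren, Eff.substC, Eff.fv, h]
    · simp only [Eff.ren, Eff.substC, if_neg h, Eff.fv]
      rw [show ({c} : Finset ℕ).erase a = {c} from Finset.erase_eq_of_notMem
        (by simp only [Finset.mem_singleton]; exact fun e => h e.symm)]
  | uvar x => simp [Eff.ren, Eff.substC, Eff.fv]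
  | pure => simp [Eff.ren, Eff.substC, Eff.fv]
  | join e₁ e₂ ih₁ ih₂ =>
    simp only [Eff.ren, Eff.substC, Eff.fv, Finset.erase_union_distrib] at *
    rw [ih₁, ih₂]

lemma ty_ren_fv (a b : ℕ) (t : Ty) :
    (t.ren a b).fv.erase b = (t.fv.erase a).erase b := by
  induction t with
  | tvar c =>
    by_cases h : c = a
    · simp [Ty.ren, Ty.fv, h]
    · simp only [Ty.ren, if_neg h, Ty.fv]
      rw [show ({c} : Finset ℕ).erase a = {c} from Finset.erase_eq_of_notMem
        (by simp only [Finset.mem_singleton]; exact fun e => h e.symm)]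
  | uvar x => simp [Ty.ren, Ty.fv]
  | int => simp [Ty.ren, Ty.fv]
  | arrow t₁ e t₂ ih₁ ih₂ =>
    simp only [Ty.ren, Ty.fv, Finset.erase_union_distrib]
    rw [ih₁, ih₂, eff_ren_fv]
  | all c k t ih =>
    by_cases h : c = a
    · subst h
      simp [Ty.ren, Ty.fv, Finset.erase_idem, Finset.erase_right_comm]
    · simp only [Ty.ren, if_neg h, Ty.fv]
      rw [Finset.erase_right_comm, ih, Finset.erase_right_comm,
        Finset.erase_right_comm (a := a)]

lemma tyEquiv_fv {t t' : Ty} (h : TyEquiv t t') : t.fv = t'.fv := by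
  induction h with
  | refl => rfl
  | symm _ ih => exact ih.symm
  | trans _ _ ih₁ ih₂ => exact ih₁.trans ih₂
  | arrow _ he _ iht₁ iht₂ =>
    simp [Ty.fv, iht₁, iht₂, effEquiv_fv he]
  | all a k _ ih => simp [Ty.fv, ih]
  | alpha a b k hfv hbv =>
    simp only [Ty.fv]
    rw [ty_ren_fv]
    exact (Finset.erase_eq_of_notMem
      (fun hmem => hfv (Finset.mem_of_mem_erase hmem))).symm

/-- The unification algorithm is incorrect on polymorphic types:
unify(∀α:type.α, ∀α:type.x̂) succeeds with some substitution θ and the empty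
constraint set, the identity substitution is a model of the empty constraint
set, yet θ(∀α:type.α) and θ(∀α:type.x̂) are not equivalent. -/
theorem unify_incorrect (a x : ℕ) :
    ∃ θ : Subst,
      Unify (.all a .type (.tvar a)) (.all a .type (.uvar x)) θ [] ∧
      IsModel idModel ∧ Models idModel [] ∧
      ¬ TyEquiv (Ty.applyS θ (.all a .type (.tvar a)))
                (Ty.applyS θ (.all a .type (.uvar x))) := by
  refine ⟨Subst.single x (.ty (.tvar (a+1))), ?_, ?_, ?_, ?_⟩
  · apply Unify.all (b := a+1)
    · simp [Ty.fv]
    · simp [Ty.bv]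
    · simp [Ty.bv]
    · have h1 : (Ty.tvar a).ren a (a+1) = Ty.tvar (a+1) := by simp [Ty.ren]
      have h2 : (Ty.uvar x).ren a (a+1) = Ty.uvar x := by simp [Ty.ren]
      rw [h1, h2]
      exact Unify.uvarR (by simp [Ty.fuv]) (Mono.tvar _)
  · intro y e h; simp [idModel] at h
  · intro p hp; simp at hp
  · intro h
    have hfv := tyEquiv_fv h
    have h1 : (Ty.applyS (Subst.single x (.ty (.tvar (a+1))))
        (.all a .type (.tvar a))).fv = ∅ := by
      simp [Ty.applyS, Ty.fv]
    have h2 : a + 1 ∈ (Ty.applyS (Subst.single x (.ty (.tvar (a+1))))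
        (.all a .type (.uvar x))).fv := by
      simp [Ty.applyS, Subst.single, Ty.fv, Finset.mem_erase]
    rw [← hfv, h1] at h2
    simp at h2
end

section
/- There exists a counterexample with effect polymorphism to the correctness of the unification algorithm: unifying ∀α:effect. τ₁ →α τ₂ with ∀α:effect. τ₁ →x̂ τ₂ (for closed monomorphic types τ₁, τ₂ and fresh effect unification variable x̂) produces a substitution θ and constraint set C such that some model satisfies C, yet the θ-images of the two types are not equivalent under that model. -/
lemma effApplyS_id (e : Eff) : e.applyS idSubst = e := by
  induction e <;> simp_all [Eff.applyS, idSubst]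

lemma tyApplyS_id (t : Ty) : t.applyS idSubst = t := by
  induction t <;> simp_all [Ty.applyS, idSubst, effApplyS_id]

lemma comp_id : Subst.comp idSubst idSubst = idSubst := by
  funext y; simp [Subst.comp, idSubst]

lemma effApplyM_fuv {m : EModel} {e : Eff} (h : e.fuv = ∅) : e.applyM m = e := by
  induction e <;> simp_all [Eff.fuv, Eff.applyM, Finset.union_eq_empty]

lemma tyApplyM_fuv {m : EModel} {t : Ty} (h : t.fuv = ∅) : t.applyM m = t := by
  induction t <;> simp_all [Ty.fuv, Ty.applyM, Finset.union_eq_empty, effApplyM_fuv]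

lemma mono_bv {t : Ty} (h : Mono t) : t.bv = [] := by
  induction h <;> simp_all [Ty.bv]

lemma effRen_nofv {e : Eff} {a b : ℕ} (h : a ∉ e.fv) : e.ren a b = e := by
  induction e with
  | tvar c =>
    simp only [Eff.fv, Finset.mem_singleton] at h
    simp [Eff.ren, Eff.substC, if_neg (Ne.symm h)]
  | uvar x => rfl
  | pure => rfl
  | join e₁ e₂ ih₁ ih₂ =>
    simp only [Eff.fv, Finset.mem_union, not_or] at h
    simp only [Eff.ren, Eff.substC] at ih₁ ih₂ ⊢
    rw [ih₁ h.1, ih₂ h.2]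

lemma tyRen_nofv {t : Ty} {a b : ℕ} (hm : Mono t) (h : t.fv = ∅) : t.ren a b = t := by
  induction hm <;> simp_all [Ty.fv, Ty.ren, Finset.union_eq_empty]
  exact effRen_nofv (by simp [*])

lemma effEquiv_fv_s7 {e₁ e₂ : Eff} (h : EffEquiv e₁ e₂) : e₁.fv = e₂.fv := by
  induction h <;>
    simp_all [Eff.fv, Finset.union_comm, Finset.union_assoc, Finset.union_left_comm]

lemma unify_refl {t : Ty} (hm : Mono t) :
    ∃ C, Unify t t idSubst C ∧ ∀ p ∈ C, p.1 = p.2 := by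
  induction hm with
  | tvar a => exact ⟨[], Unify.tvar a, by simp⟩
  | uvar x => exact ⟨[], Unify.uvarRefl x, by simp⟩
  | int => exact ⟨[], Unify.int, by simp⟩
  | arrow e _ _ ih₁ ih₂ =>
    obtain ⟨C₁, h₁, hp₁⟩ := ih₁
    obtain ⟨C₂, h₂, hp₂⟩ := ih₂
    refine ⟨C₁ ++ C₂ ++ [(e, e)], ?_, ?_⟩
    · have := Unify.arrow (e₁ := e) (e₂ := e) h₁ (by rw [tyApplyS_id]; exact h₂)
      rwa [comp_id] at this
    · intro p hp
      rcases List.mem_append.1 hp with h | h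
      · rcases List.mem_append.1 h with h | h
        exacts [hp₁ p h, hp₂ p h]
      · simp_all

lemma eff_ren_sub (e : Eff) (a b : ℕ) : (e.ren a b).fv ⊆ insert b (e.fv.erase a) := by
  induction e with
  | tvar c =>
    by_cases hc : c = a
    · subst hc; simp [Eff.ren, Eff.substC, Eff.fv]
    · simp only [Eff.ren, Eff.substC, if_neg hc, Eff.fv]
      intro y hy
      rw [Finset.mem_singleton] at hy; subst hy
      exact Finset.mem_insert_of_mem (Finset.mem_erase.2 ⟨hc, Finset.mem_singleton_self _⟩)
  | uvar x => simp [Eff.ren, Eff.substC, Eff.fv]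
  | pure => simp [Eff.ren, Eff.substC, Eff.fv]
  | join e₁ e₂ ih₁ ih₂ =>
    intro y hy
    simp only [Eff.ren, Eff.substC, Eff.fv, Finset.mem_union] at hy
    simp only [Eff.ren] at ih₁ ih₂
    rcases hy with hy | hy
    · have := ih₁ hy; simp only [Eff.fv, Finset.mem_insert, Finset.mem_erase,
        Finset.mem_union] at this ⊢; tauto
    · have := ih₂ hy; simp only [Eff.fv, Finset.mem_insert, Finset.mem_erase,
        Finset.mem_union] at this ⊢; tauto

lemma eff_ren_sup (e : Eff) (a b : ℕ) : e.fv.erase a ⊆ (e.ren a b).fv := by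
  induction e with
  | tvar c =>
    by_cases hc : c = a
    · subst hc; simp [Eff.ren, Eff.substC, Eff.fv]
    · simp only [Eff.ren, Eff.substC, if_neg hc, Eff.fv]
      intro y hy; exact Finset.mem_of_mem_erase hy
  | uvar x => simp [Eff.ren, Eff.substC, Eff.fv]
  | pure => simp [Eff.ren, Eff.substC, Eff.fv]
  | join e₁ e₂ ih₁ ih₂ =>
    intro y hy
    simp only [Eff.fv, Finset.mem_erase, Finset.mem_union] at hy
    simp only [Eff.ren, Eff.substC, Eff.fv, Finset.mem_union]
    simp only [Eff.ren] at ih₁ ih₂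
    rcases hy.2 with h | h
    · exact Or.inl (ih₁ (Finset.mem_erase.2 ⟨hy.1, h⟩))
    · exact Or.inr (ih₂ (Finset.mem_erase.2 ⟨hy.1, h⟩))

lemma ty_ren_sub (t : Ty) (a b : ℕ) : (t.ren a b).fv ⊆ insert b (t.fv.erase a) := by
  induction t with
  | tvar c =>
    by_cases hc : c = a
    · subst hc; simp [Ty.ren, Ty.fv]
    · simp only [Ty.ren, if_neg hc, Ty.fv]
      intro y hy
      rw [Finset.mem_singleton] at hy; subst hy
      exact Finset.mem_insert_of_mem (Finset.mem_erase.2 ⟨hc, Finset.mem_singleton_self _⟩)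
  | uvar x => simp [Ty.ren, Ty.fv]
  | int => simp [Ty.ren, Ty.fv]
  | arrow t₁ e t₂ ih₁ ih₂ =>
    intro y hy
    simp only [Ty.ren, Ty.fv, Finset.mem_union] at hy
    have he := eff_ren_sub e a b
    simp only [Ty.fv, Finset.mem_insert, Finset.mem_erase, Finset.mem_union]
    rcases hy with (hy | hy) | hy
    · have := ih₁ hy; simp only [Finset.mem_insert, Finset.mem_erase] at this; tauto
    · have := he hy; simp only [Finset.mem_insert, Finset.mem_erase] at this; tauto
    · have := ih₂ hy; simp only [Finset.mem_insert, Finset.mem_erase] at this; tauto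
  | all c k t ih =>
    by_cases hc : c = a
    · subst hc
      simp only [Ty.ren, if_pos rfl, Ty.fv]
      intro y hy
      exact Finset.mem_insert_of_mem (Finset.mem_erase.2
        ⟨Finset.ne_of_mem_erase hy, hy⟩)
    · simp only [Ty.ren, if_neg hc, Ty.fv]
      intro y hy
      have h1 : y ≠ c := Finset.ne_of_mem_erase hy
      have h2 := ih (Finset.mem_of_mem_erase hy)
      rcases Finset.mem_insert.1 h2 with h | h
      · exact Finset.mem_insert.2 (Or.inl h)
      · exact Finset.mem_insert.2 (Or.inr (Finset.mem_erase.2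
          ⟨Finset.ne_of_mem_erase h,
           Finset.mem_erase.2 ⟨h1, Finset.mem_of_mem_erase h⟩⟩))

lemma ty_ren_sup (t : Ty) (a b : ℕ) : t.fv.erase a ⊆ (t.ren a b).fv := by
  induction t with
  | tvar c =>
    by_cases hc : c = a
    · subst hc; simp [Ty.ren, Ty.fv]
    · simp only [Ty.ren, if_neg hc, Ty.fv]
      intro y hy; exact Finset.mem_of_mem_erase hy
  | uvar x => simp [Ty.ren, Ty.fv]
  | int => simp [Ty.ren, Ty.fv]
  | arrow t₁ e t₂ ih₁ ih₂ =>
    intro y hy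
    simp only [Ty.fv, Finset.mem_erase, Finset.mem_union] at hy
    have he := eff_ren_sup e a b
    simp only [Ty.ren, Ty.fv, Finset.mem_union]
    rcases hy.2 with (h | h) | h
    · exact Or.inl (Or.inl (ih₁ (Finset.mem_erase.2 ⟨hy.1, h⟩)))
    · exact Or.inl (Or.inr (he (Finset.mem_erase.2 ⟨hy.1, h⟩)))
    · exact Or.inr (ih₂ (Finset.mem_erase.2 ⟨hy.1, h⟩))
  | all c k t ih =>
    by_cases hc : c = a
    · subst hc
      simp only [Ty.ren, if_pos rfl, Ty.fv]
      intro y hy; exact Finset.mem_of_mem_erase hy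
    · simp only [Ty.ren, if_neg hc, Ty.fv]
      intro y hy
      have ha : y ≠ a := Finset.ne_of_mem_erase hy
      have h' := Finset.mem_of_mem_erase hy
      have hcy : y ≠ c := Finset.ne_of_mem_erase h'
      have hmem := Finset.mem_of_mem_erase h'
      exact Finset.mem_erase.2 ⟨hcy, ih (Finset.mem_erase.2 ⟨ha, hmem⟩)⟩

lemma tyEquiv_fv_s7 {t₁ t₂ : Ty} (h : TyEquiv t₁ t₂) : t₁.fv = t₂.fv := by
  induction h with
  | refl t => rfl
  | symm _ ih => exact ih.symm
  | trans _ _ ih₁ ih₂ => exact ih₁.trans ih₂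
  | arrow _ he _ ih₁ ih₂ => simp [Ty.fv, ih₁, ih₂, effEquiv_fv_s7 he]
  | all a k _ ih => simp [Ty.fv, ih]
  | alpha a b k hbfv hbbv =>
    rename_i t
    simp only [Ty.fv]
    apply Finset.Subset.antisymm
    · intro y hy
      have hy' := Finset.mem_erase.1 hy
      have := ty_ren_sup t a b hy
      refine Finset.mem_erase.2 ⟨?_, this⟩
      intro hyb; subst hyb; exact hbfv hy'.2
    · intro y hy
      have hy' := Finset.mem_erase.1 hy
      have := ty_ren_sub t a b hy'.2
      rcases Finset.mem_insert.1 this with h | h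
      · exact absurd h hy'.1
      · exact h


/-- A counterexample with effect polymorphism: unifying
∀α:effect. τ₁ →α τ₂ with ∀α:effect. τ₁ →x̂ τ₂ (for closed monomorphic τ₁, τ₂
and fresh effect unification variable x̂) yields θ and C such that some model
satisfies C, yet the θ-images of the two types are not equivalent under it. -/
theorem unify_incorrect_eff (τ₁ τ₂ : Ty) (a x : ℕ)
    (hfv₁ : τ₁.fv = ∅) (hfv₂ : τ₂.fv = ∅)
    (hfuv₁ : τ₁.fuv = ∅) (hfuv₂ : τ₂.fuv = ∅)
    (hm₁ : Mono τ₁) (hm₂ : Mono τ₂) :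
    ∃ (θ : Subst) (C : List (Eff × Eff)),
      Unify (.all a .effect (.arrow τ₁ (.tvar a) τ₂))
            (.all a .effect (.arrow τ₁ (.uvar x) τ₂)) θ C ∧
      ∃ μ : EModel, IsModel μ ∧ Models μ C ∧
        ¬ TyEquiv
          (Ty.applyM μ (Ty.applyS θ (.all a .effect (.arrow τ₁ (.tvar a) τ₂))))
          (Ty.applyM μ (Ty.applyS θ (.all a .effect (.arrow τ₁ (.uvar x) τ₂)))) := by
  
  obtain ⟨C₁, hU₁, hP₁⟩ := unify_refl hm₁
  obtain ⟨C₂, hU₂, hP₂⟩ := unify_refl hm₂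
  refine ⟨idSubst, C₁ ++ C₂ ++ [(.tvar (a+1), .uvar x)], ?_, ?_⟩
  · apply Unify.all (b := a + 1)
    · simp [Ty.fv, Eff.fv, hfv₁, hfv₂]
    · simp [Ty.bv, mono_bv hm₁, mono_bv hm₂]
    · simp [Ty.bv, mono_bv hm₁, mono_bv hm₂]
    · have hr₁ : Ty.ren a (a+1) τ₁ = τ₁ := tyRen_nofv hm₁ hfv₁
      have hr₂ : Ty.ren a (a+1) τ₂ = τ₂ := tyRen_nofv hm₂ hfv₂
      have := Unify.arrow (e₁ := Eff.tvar (a+1)) (e₂ := Eff.uvar x) hU₁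
        (by rw [tyApplyS_id]; exact hU₂)
      rw [comp_id] at this
      simpa [Ty.ren, hr₁, hr₂, Eff.ren, Eff.substC] using this
  · refine ⟨fun y => if y = x then some (.tvar (a+1)) else none, ?_, ?_, ?_⟩
    · intro y e he
      by_cases hy : y = x <;> simp [hy] at he
      simp [← he, Eff.fuv]
    · intro p hp
      rcases List.mem_append.1 hp with h | h
      · rcases List.mem_append.1 h with h | h
        · rw [hP₁ p h]; exact EffEquiv.refl _
        · rw [hP₂ p h]; exact EffEquiv.refl _
      · simp only [List.mem_singleton] at h
        subst h
        simp only [Eff.applyM, Option.getD, if_pos rfl]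
        exact EffEquiv.refl _
    · intro h
      rw [tyApplyS_id, tyApplyS_id] at h
      simp only [Ty.applyM, Eff.applyM, tyApplyM_fuv hfuv₁, tyApplyM_fuv hfuv₂,
        if_pos rfl, Option.getD] at h
      have := tyEquiv_fv_s7 h
      simp [Ty.fv, Eff.fv, hfv₁, hfv₂, Finset.erase_singleton,
        Finset.erase_eq_of_notMem, Finset.ext_iff] at this
end
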